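/- Let J(X) = φ(Λ_X) be a convex scalar-valued spectral function on ℝ^{n₁×n₂}, where φ is a proper lsc convex symmetric function on ℝ^n (n = min(n₁,n₂)) extended by φ(Λ) = φ(|Λ|). Then for every γ > 0 and every X with SVD X = V_X diag(Λ_X) U_X^*, the proximity operator satisfies Prox_{γJ}(X) = V_X diag(Prox_{γφ}(Λ_X)) U_X^*. -/

import Mathlib

/-!
Put `Y = V diag(p) Uᵀ`. Optimality of `p` for the vector problem gives the variational inequality
`⟪Λ - p, w - p⟫ ≤ γ (φ w - φ p)` for all `w`. For any `Z` with singular values `s`, von Neumann's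
trace inequality bounds `⟪X - Y, Z⟫` by the pairing of `|Λ - p|` with `s` ordered alike; a signed
rearrangement `w` of `s` realises this pairing against `Λ - p` and has `φ w = φ s = J Z` by the
symmetries of `φ`. Hence `⟪X - Y, Z - Y⟫ ≤ γ (J Z - J Y)`, and expanding the square shows that the
matrix objective at `Z` exceeds its value at `Y` by at least `‖Z - Y‖² / 2`.

Von Neumann's inequality reduces, through the orthogonal matrices relating the two SVDs, to a
rearrangement inequality with doubly substochastic weights; padding these to a doubly stochastic
matrix, it follows from Birkhoff's theorem and the classical rearrangement inequality.
-/

open Matrix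

/-- The rectangular `n₁ × n₂` matrix with the vector `Λ ∈ ℝ^{min n₁ n₂}` on its main
diagonal and `0` elsewhere. -/
noncomputable def rectDiag {n₁ n₂ : ℕ} (Λ : Fin (min n₁ n₂) → ℝ) :
    Matrix (Fin n₁) (Fin n₂) ℝ :=
  Matrix.of fun i j =>
    if h : (i : ℕ) = (j : ℕ) ∧ (i : ℕ) < min n₁ n₂ then Λ ⟨(i : ℕ), h.2⟩ else 0

/-- `(V, Λ, U)` is a (full) singular value decomposition of `X ∈ ℝ^{n₁ × n₂}`. -/
noncomputable def IsSVD {n₁ n₂ : ℕ} (X : Matrix (Fin n₁) (Fin n₂) ℝ)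
    (V : Matrix (Fin n₁) (Fin n₁) ℝ) (Λ : Fin (min n₁ n₂) → ℝ)
    (U : Matrix (Fin n₂) (Fin n₂) ℝ) : Prop :=
  Vᵀ * V = 1 ∧ V * Vᵀ = 1 ∧ Uᵀ * U = 1 ∧ U * Uᵀ = 1 ∧ (∀ i, 0 ≤ Λ i) ∧
    X = V * rectDiag Λ * Uᵀ

/-- Convexity for an extended-real-valued function on a real vector space. -/
def ERealConvex {E : Type*} [AddCommGroup E] [Module ℝ E] (f : E → EReal) : Prop :=
  ∀ x y : E, ∀ a b : ℝ, 0 ≤ a → 0 ≤ b → a + b = 1 →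
    f (a • x + b • y) ≤ (a : EReal) * f x + (b : EReal) * f y

/-- The objective function of the proximity operator of `γ • φ` at `t`
(vector version, squared Euclidean norm). -/
noncomputable def proxObjVec {n : ℕ} (γ : ℝ) (φ : (Fin n → ℝ) → EReal)
    (t z : Fin n → ℝ) : EReal :=
  (((1 / 2 : ℝ) * ∑ i, (t i - z i) ^ 2 : ℝ) : EReal) + (γ : EReal) * φ z

/-- The objective function of the proximity operator of `γ • J` at `X`
(matrix version, squared Frobenius norm). -/
noncomputable def proxObjMat {n₁ n₂ : ℕ} (γ : ℝ)
    (J : Matrix (Fin n₁) (Fin n₂) ℝ → EReal)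
    (X Z : Matrix (Fin n₁) (Fin n₂) ℝ) : EReal :=
  (((1 / 2 : ℝ) * ∑ i, ∑ j, (X i j - Z i j) ^ 2 : ℝ) : EReal) + (γ : EReal) * J Z

open Finset Filter Topology Module
open scoped InnerProductSpace

namespace SpectralProx

variable {n₁ n₂ : ℕ}

abbrev diagRow (k : Fin (min n₁ n₂)) : Fin n₁ := Fin.castLE (min_le_left n₁ n₂) k

abbrev diagCol (k : Fin (min n₁ n₂)) : Fin n₂ := Fin.castLE (min_le_right n₁ n₂) k

lemma rectDiag_eq_sum_single (v : Fin (min n₁ n₂) → ℝ) :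
    rectDiag v = ∑ k, single (diagRow k) (diagCol k) (v k) := by
  ext i j
  rw [rectDiag, of_apply, Matrix.sum_apply]
  split_ifs with h
  · rw [Finset.sum_eq_single ⟨i, h.2⟩]
    · simp [single_apply, Fin.ext_iff, h.1]
    · intro k _ hk
      simp only [single_apply, Fin.ext_iff, Fin.val_castLE]
      rw [if_neg]
      rintro ⟨h1, -⟩
      exact hk (Fin.ext h1)
    · simp
  · refine (Finset.sum_eq_zero fun k _ => ?_).symm
    simp only [single_apply, Fin.ext_iff, Fin.val_castLE]
    rw [if_neg]
    rintro ⟨h1, h2⟩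
    exact h ⟨h1 ▸ h2, h1 ▸ k.2⟩

lemma rectDiag_sub (v w : Fin (min n₁ n₂) → ℝ) :
    rectDiag (v - w) = rectDiag v - rectDiag w := by
  ext i j
  simp only [rectDiag, of_apply, Matrix.sub_apply, Pi.sub_apply]
  split_ifs <;> simp

lemma diagonal_mul_rectDiag (e : Fin n₁ → ℝ) (v : Fin (min n₁ n₂) → ℝ) :
    diagonal e * rectDiag v = rectDiag fun k => e (diagRow k) * v k := by
  ext i j
  simp only [diagonal_mul, rectDiag, of_apply]
  split_ifs <;> simp

lemma mul_rectDiag_mul_apply {m p : Type*} [Fintype m] [Fintype p]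
    (P : Matrix m (Fin n₁) ℝ) (b : Fin (min n₁ n₂) → ℝ) (R : Matrix (Fin n₂) p ℝ) (i : m) (j : p) :
    (P * rectDiag b * R) i j = ∑ l, b l * P i (diagRow l) * R (diagCol l) j := by
  simp only [rectDiag_eq_sum_single, Matrix.mul_sum, Matrix.sum_mul, Matrix.sum_apply]
  refine Finset.sum_congr rfl fun l _ => ?_
  simp [mul_apply, single_apply, ite_and, mul_comm, mul_left_comm]

lemma mul_rectDiag_apply_diagCol {m : Type*} [Fintype m] (M : Matrix m (Fin n₁) ℝ)
    (s : Fin (min n₁ n₂) → ℝ) (x : m) (k : Fin (min n₁ n₂)) :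
    (M * rectDiag s) x (diagCol k) = s k * M x (diagRow k) := by
  simpa [one_apply, Fin.castLE_inj] using mul_rectDiag_mul_apply M s 1 x (diagCol k)

lemma mul_rectDiag_apply_of_le {m : Type*} [Fintype m] (M : Matrix m (Fin n₁) ℝ)
    (s : Fin (min n₁ n₂) → ℝ) (x : m) {j : Fin n₂} (hj : n₁ ≤ j) :
    (M * rectDiag s) x j = 0 := by
  refine (mul_apply ..).trans (Finset.sum_eq_zero fun i _ => ?_)
  rw [rectDiag, of_apply, dif_neg fun h => (h.1 ▸ i.2).not_ge hj, mul_zero]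

section Frobenius

variable {m n : Type*} [Fintype m] [Fintype n]

def frobeniusInner (A B : Matrix m n ℝ) : ℝ := ∑ i, ∑ j, A i j * B i j

lemma frobeniusInner_comm (A B : Matrix m n ℝ) : frobeniusInner A B = frobeniusInner B A := by
  simp only [frobeniusInner, mul_comm]

lemma frobeniusInner_sub_left (A B C : Matrix m n ℝ) :
    frobeniusInner (A - B) C = frobeniusInner A C - frobeniusInner B C := by
  simp only [frobeniusInner, Matrix.sub_apply, sub_mul, Finset.sum_sub_distrib]

lemma frobeniusInner_sub_right (A B C : Matrix m n ℝ) :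
    frobeniusInner A (B - C) = frobeniusInner A B - frobeniusInner A C := by
  simp only [frobeniusInner, Matrix.sub_apply, mul_sub, Finset.sum_sub_distrib]

lemma frobeniusInner_self_nonneg (A : Matrix m n ℝ) : 0 ≤ frobeniusInner A A :=
  Finset.sum_nonneg fun _ _ => Finset.sum_nonneg fun _ _ => mul_self_nonneg _

lemma frobeniusInner_self_eq_zero {A : Matrix m n ℝ} : frobeniusInner A A = 0 ↔ A = 0 := by
  simp only [frobeniusInner, Finset.sum_eq_zero_iff_of_nonneg (fun i _ => Finset.sum_nonneg
    fun j _ => mul_self_nonneg (A i j)), Finset.sum_eq_zero_iff_of_nonneg (fun j _ =>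
    mul_self_nonneg _), Finset.mem_univ, true_implies, mul_self_eq_zero, ← Matrix.ext_iff,
    Matrix.zero_apply]

lemma frobeniusInner_sub_sub_self (A B : Matrix m n ℝ) :
    frobeniusInner (A - B) (A - B) =
      frobeniusInner A A - 2 * frobeniusInner A B + frobeniusInner B B := by
  rw [frobeniusInner_sub_left, frobeniusInner_sub_right, frobeniusInner_sub_right,
    frobeniusInner_comm B A]
  ring

lemma frobeniusInner_eq_trace (A B : Matrix m n ℝ) : frobeniusInner A B = trace (Aᵀ * B) := by
  simp only [frobeniusInner, trace, Matrix.diag, mul_apply, transpose_apply]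
  exact Finset.sum_comm

lemma frobeniusInner_mul_mul_transpose_left {m' n' : Type*} [Fintype m'] [Fintype n']
    (V : Matrix m m' ℝ) (A : Matrix m' n' ℝ) (U : Matrix n n' ℝ) (B : Matrix m n ℝ) :
    frobeniusInner (V * A * Uᵀ) B = frobeniusInner A (Vᵀ * B * U) := by
  simp only [frobeniusInner_eq_trace, transpose_mul, transpose_transpose, Matrix.mul_assoc]
  rw [trace_mul_comm]
  simp only [Matrix.mul_assoc]

lemma frobeniusInner_mul_mul_transpose [DecidableEq m] [DecidableEq n] {V : Matrix m m ℝ}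
    {U : Matrix n n ℝ}    (hV : V ∈ orthogonalGroup m ℝ) (hU : U ∈ orthogonalGroup n ℝ) (A B : Matrix m n ℝ) :
    frobeniusInner (V * A * Uᵀ) (V * B * Uᵀ) = frobeniusInner A B := by
  rw [frobeniusInner_mul_mul_transpose_left, ← Matrix.mul_assoc, ← Matrix.mul_assoc,
    (mem_orthogonalGroup_iff' _ _).1 hV, Matrix.mul_assoc, (mem_orthogonalGroup_iff' _ _).1 hU,
    Matrix.one_mul, Matrix.mul_one]

end Frobenius

lemma frobeniusInner_rectDiag_left (a : Fin (min n₁ n₂) → ℝ) (B : Matrix (Fin n₁) (Fin n₂) ℝ) :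
    frobeniusInner (rectDiag a) B = ∑ k, a k * B (diagRow k) (diagCol k) := by
  simp only [frobeniusInner, rectDiag_eq_sum_single, Matrix.sum_apply, Finset.sum_mul]
  rw [Finset.sum_comm, Finset.sum_congr rfl fun i _ => Finset.sum_comm]
  simp only [single_apply, ite_and, ite_mul, zero_mul, sum_ite_eq, mem_univ, ↓reduceIte]
  rw [Finset.sum_comm]
  simp

lemma frobeniusInner_rectDiag (a b : Fin (min n₁ n₂) → ℝ) :
    frobeniusInner (rectDiag a) (rectDiag b : Matrix (Fin n₁) (Fin n₂) ℝ) = ∑ k, a k * b k := by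
  rw [frobeniusInner_rectDiag_left]
  simp [rectDiag_eq_sum_single, Matrix.sum_apply, single_apply, Fin.castLE_inj]

lemma sum_sq_row_eq_one {n : Type*} [Fintype n] [DecidableEq n] {Q : Matrix n n ℝ}
    (hQ : Q ∈ orthogonalGroup n ℝ) (i : n) : ∑ j, Q i j ^ 2 = 1 := by
  simpa [mul_apply, sq] using congrFun₂ ((mem_orthogonalGroup_iff _ _).1 hQ) i i

lemma sum_sq_col_eq_one {n : Type*} [Fintype n] [DecidableEq n] {Q : Matrix n n ℝ}
    (hQ : Q ∈ orthogonalGroup n ℝ) (j : n) : ∑ i, Q i j ^ 2 = 1 := by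
  simpa [mul_apply, sq] using congrFun₂ ((mem_orthogonalGroup_iff' _ _).1 hQ) j j

lemma transpose_mul_mem_orthogonalGroup {n : Type*} [Fintype n] [DecidableEq n]
    {P Q : Matrix n n ℝ} (hP : P ∈ orthogonalGroup n ℝ) (hQ : Q ∈ orthogonalGroup n ℝ) :
    Pᵀ * Q ∈ orthogonalGroup n ℝ := by
  rw [mem_orthogonalGroup_iff', transpose_mul, transpose_transpose, Matrix.mul_assoc,
    ← Matrix.mul_assoc P, (mem_orthogonalGroup_iff _ _).1 hP, Matrix.one_mul,
    (mem_orthogonalGroup_iff' _ _).1 hQ]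

lemma of_orthonormalBasis_mem_orthogonalGroup {n : Type*} [Fintype n] [DecidableEq n]
    (e : OrthonormalBasis n ℝ (EuclideanSpace ℝ n)) :
    of (fun i j => e j i) ∈ orthogonalGroup n ℝ := by
  rw [mem_orthogonalGroup_iff']
  refine Matrix.ext fun i j => ?_
  rw [one_apply, ← orthonormal_iff_ite.1 e.orthonormal i j]
  simp [mul_apply, PiLp.inner_apply, mul_comm]

lemma _root_.IsSVD.left_mem_orthogonalGroup {X : Matrix (Fin n₁) (Fin n₂) ℝ} {V Λ U}
    (h : IsSVD X V Λ U) : V ∈ orthogonalGroup (Fin n₁) ℝ :=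
  (mem_orthogonalGroup_iff _ _).2 h.2.1

lemma _root_.IsSVD.right_mem_orthogonalGroup {X : Matrix (Fin n₁) (Fin n₂) ℝ} {V Λ U}
    (h : IsSVD X V Λ U) : U ∈ orthogonalGroup (Fin n₂) ℝ :=
  (mem_orthogonalGroup_iff _ _).2 h.2.2.2.1

lemma _root_.IsSVD.nonneg {X : Matrix (Fin n₁) (Fin n₂) ℝ} {V Λ U} (h : IsSVD X V Λ U)
    (k : Fin (min n₁ n₂)) : 0 ≤ Λ k :=
  h.2.2.2.2.1 k

lemma _root_.IsSVD.eq {X : Matrix (Fin n₁) (Fin n₂) ℝ} {V Λ U} (h : IsSVD X V Λ U) :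
    X = V * rectDiag Λ * Uᵀ :=
  h.2.2.2.2.2

lemma isSVD_of_mem_orthogonalGroup {V : Matrix (Fin n₁) (Fin n₁) ℝ}
    {U : Matrix (Fin n₂) (Fin n₂) ℝ} (hV : V ∈ orthogonalGroup _ ℝ) (hU : U ∈ orthogonalGroup _ ℝ)
    {Λ : Fin (min n₁ n₂) → ℝ} (hΛ : ∀ k, 0 ≤ Λ k) : IsSVD (V * rectDiag Λ * Uᵀ) V Λ U :=
  ⟨(mem_orthogonalGroup_iff' _ _).1 hV, (mem_orthogonalGroup_iff _ _).1 hV,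
    (mem_orthogonalGroup_iff' _ _).1 hU, (mem_orthogonalGroup_iff _ _).1 hU, hΛ, rfl⟩

lemma exists_isSVD_abs {V : Matrix (Fin n₁) (Fin n₁) ℝ} {U : Matrix (Fin n₂) (Fin n₂) ℝ}
    (hV : V ∈ orthogonalGroup _ ℝ) (hU : U ∈ orthogonalGroup _ ℝ) (d : Fin (min n₁ n₂) → ℝ) :
    ∃ V', IsSVD (V * rectDiag d * Uᵀ) V' (fun k => |d k|) U := by
  classical
  set e : Fin n₁ → ℝ := fun i => if ∃ k, diagRow k = i ∧ d k < 0 then -1 else 1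
  have he : diagonal e ∈ orthogonalGroup _ ℝ := by
    rw [mem_orthogonalGroup_iff, diagonal_transpose, diagonal_mul_diagonal, ← diagonal_one]
    congr 1
    ext i
    simp only [e]
    split_ifs <;> norm_num
  have hsign : (fun k => e (diagRow k) * |d k|) = d := by
    ext k
    by_cases hk : d k < 0
    · rw [show e (diagRow k) = -1 from if_pos ⟨k, rfl, hk⟩, abs_of_neg hk, neg_one_mul, neg_neg]
    · have : ¬∃ l, diagRow l = diagRow k ∧ d l < 0 := fun ⟨l, hl, hl'⟩ =>
        hk (Fin.castLE_injective _ hl ▸ hl')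
      rw [show e (diagRow k) = 1 from if_neg this, one_mul, abs_of_nonneg (not_lt.1 hk)]
  refine ⟨V * diagonal e, ?_⟩
  convert isSVD_of_mem_orthogonalGroup (Submonoid.mul_mem _ hV he) hU fun k => abs_nonneg (d k)
    using 1
  rw [Matrix.mul_assoc V (diagonal e), diagonal_mul_rectDiag, hsign]

section Rearrangement

variable {ι : Type*}

lemma monovary_sum_elim_zero {f g : ι → ℝ} (hf : 0 ≤ f) (hg : 0 ≤ g) (hfg : Monovary f g) :
    Monovary (Sum.elim f 0 : ι ⊕ ι → ℝ) (Sum.elim g 0) := by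
  rintro (i | i) (j | j) h <;> simp only [Sum.elim_inl, Sum.elim_inr, Pi.zero_apply] at h ⊢
  · exact hfg h
  · exact absurd h (hg i).not_gt
  · exact hf j
  · exact le_rfl

variable [Fintype ι] [DecidableEq ι]

lemma sum_sum_mul_mul_le_of_mem_doublyStochastic {f g : ι → ℝ} (hfg : Monovary f g)
    {M : Matrix ι ι ℝ} (hM : M ∈ doublyStochastic ℝ ι) :
    ∑ i, ∑ j, f i * g j * M i j ≤ ∑ i, f i * g i := by
  obtain ⟨w, hw0, hw1, rfl⟩ := exists_eq_sum_perm_of_mem_doublyStochastic hM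
  have hperm (σ : Equiv.Perm ι) :
      ∑ i, ∑ j, f i * g j * σ.permMatrix ℝ i j = ∑ i, f i * g (σ i) := by
    simp [Equiv.Perm.permMatrix, PEquiv.toMatrix_apply, Equiv.toPEquiv_apply]
  calc ∑ i, ∑ j, f i * g j * (∑ σ, w σ • σ.permMatrix ℝ) i j
      = ∑ σ, w σ * ∑ i, f i * g (σ i) := by
        simp only [Matrix.sum_apply, Matrix.smul_apply, smul_eq_mul, Finset.mul_sum, ← hperm]
        rw [Finset.sum_congr rfl fun i _ => Finset.sum_comm, Finset.sum_comm]
        exact Finset.sum_congr rfl fun σ _ => Finset.sum_congr rfl fun i _ =>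
          Finset.sum_congr rfl fun j _ => by ring
    _ ≤ ∑ σ, w σ * ∑ i, f i * g i :=
        Finset.sum_le_sum fun σ _ =>
          mul_le_mul_of_nonneg_left hfg.sum_mul_comp_perm_le_sum_mul (hw0 σ)
    _ = ∑ i, f i * g i := by rw [← Finset.sum_mul, hw1, one_mul]

lemma fromBlocks_mem_doublyStochastic {C : Matrix ι ι ℝ} (hC : ∀ i j, 0 ≤ C i j)
    (hrow : ∀ i, ∑ j, C i j ≤ 1) (hcol : ∀ j, ∑ i, C i j ≤ 1) :
    fromBlocks C (diagonal fun i => 1 - ∑ j, C i j) (diagonal fun j => 1 - ∑ i, C i j) Cᵀ ∈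
      doublyStochastic ℝ (ι ⊕ ι) := by
  refine mem_doublyStochastic_iff_sum.2 ⟨?_, ?_, ?_⟩
  · rintro (i | i) (j | j)
    · exact hC i j
    · simp only [fromBlocks_apply₁₂, diagonal_apply]
      split_ifs <;> linarith [hrow i]
    · simp only [fromBlocks_apply₂₁, diagonal_apply]
      split_ifs <;> linarith [hcol i]
    · exact hC j i
  · rintro (i | i) <;> simp [Fintype.sum_sum_type, diagonal_apply]
  · rintro (j | j) <;> simp [Fintype.sum_sum_type, diagonal_apply]

theorem sum_sum_mul_mul_le_of_sum_le_one {f g : ι → ℝ} (hf : 0 ≤ f) (hg : 0 ≤ g)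
    (hfg : Monovary f g) {C : Matrix ι ι ℝ} (hC : ∀ i j, 0 ≤ C i j)
    (hrow : ∀ i, ∑ j, C i j ≤ 1) (hcol : ∀ j, ∑ i, C i j ≤ 1) :
    ∑ i, ∑ j, f i * g j * C i j ≤ ∑ i, f i * g i := by
  simpa [Fintype.sum_sum_type] using sum_sum_mul_mul_le_of_mem_doublyStochastic
    (monovary_sum_elim_zero hf hg hfg) (fromBlocks_mem_doublyStochastic hC hrow hcol)

end Rearrangement

lemma exists_perm_monovary {m : ℕ} (f g : Fin m → ℝ) :
    ∃ π : Equiv.Perm (Fin m), Monovary f (g ∘ π) := by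
  refine ⟨(Tuple.sort f).symm.trans (Tuple.sort g), ?_⟩
  simpa [Function.comp_def] using
    ((Tuple.monotone_sort f).monovary (Tuple.monotone_sort g)).comp_right (Tuple.sort f).symm

lemma sum_comp_le_sum_of_injective {α β : Type*} [Fintype α] [Fintype β] {e : α → β}
    (he : Function.Injective e) {f : β → ℝ} (hf : ∀ b, 0 ≤ f b) : ∑ a, f (e a) ≤ ∑ b, f b := by
  classical
  rw [← Finset.sum_image fun x _ y _ h => he h]
  exact Finset.sum_le_sum_of_subset_of_nonneg (subset_univ _) fun b _ _ => hf b

/-- **Von Neumann's trace inequality**. -/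
theorem frobeniusInner_le_of_isSVD {A B : Matrix (Fin n₁) (Fin n₂) ℝ}
    {VA VB : Matrix (Fin n₁) (Fin n₁) ℝ} {UA UB : Matrix (Fin n₂) (Fin n₂) ℝ}
    {a b : Fin (min n₁ n₂) → ℝ} (hA : IsSVD A VA a UA) (hB : IsSVD B VB b UB)
    {π : Equiv.Perm (Fin (min n₁ n₂))} (hπ : Monovary a (b ∘ π)) :
    frobeniusInner A B ≤ ∑ k, a k * b (π k) := by
  set P := VAᵀ * VB
  set R := UBᵀ * UA
  have hP : P ∈ orthogonalGroup _ ℝ :=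
    transpose_mul_mem_orthogonalGroup hA.left_mem_orthogonalGroup hB.left_mem_orthogonalGroup
  have hR : R ∈ orthogonalGroup _ ℝ :=
    transpose_mul_mem_orthogonalGroup hB.right_mem_orthogonalGroup hA.right_mem_orthogonalGroup
  -- `P R ≤ (P² + R²) / 2` entrywise, and orthogonality of `P`, `R` makes these weights doubly
  -- substochastic.
  set C : Matrix (Fin (min n₁ n₂)) (Fin (min n₁ n₂)) ℝ :=
    of fun k l => (P (diagRow k) (diagRow l) ^ 2 + R (diagCol l) (diagCol k) ^ 2) / 2
  have hrow (k) : ∑ l, C k (π l) ≤ 1 := by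
    rw [Equiv.sum_comp π fun l => C k l]
    have h₁ := sum_comp_le_sum_of_injective (Fin.castLE_injective (min_le_left n₁ n₂))
      fun z => sq_nonneg (P (diagRow k) z)
    have h₂ := sum_comp_le_sum_of_injective (Fin.castLE_injective (min_le_right n₁ n₂))
      fun z => sq_nonneg (R z (diagCol k))
    rw [sum_sq_row_eq_one hP] at h₁
    rw [sum_sq_col_eq_one hR] at h₂
    simp only [C, of_apply, ← Finset.sum_div, Finset.sum_add_distrib]
    linarith
  have hcol (l) : ∑ k, C k (π l) ≤ 1 := by
    have h₁ := sum_comp_le_sum_of_injective (Fin.castLE_injective (min_le_left n₁ n₂))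
      fun z => sq_nonneg (P z (diagRow (π l)))
    have h₂ := sum_comp_le_sum_of_injective (Fin.castLE_injective (min_le_right n₁ n₂))
      fun z => sq_nonneg (R (diagCol (π l)) z)
    rw [sum_sq_col_eq_one hP] at h₁
    rw [sum_sq_row_eq_one hR] at h₂
    simp only [C, of_apply, ← Finset.sum_div, Finset.sum_add_distrib]
    linarith
  have hB' : VAᵀ * B * UA = P * rectDiag b * R := by
    simp only [hB.eq, P, R, Matrix.mul_assoc]
  calc frobeniusInner A B
      = ∑ k, ∑ l, a k * b l * (P (diagRow k) (diagRow l) * R (diagCol l) (diagCol k)) := by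
        rw [hA.eq, frobeniusInner_mul_mul_transpose_left, frobeniusInner_rectDiag_left, hB']
        simp only [mul_rectDiag_mul_apply, Finset.mul_sum]
        exact Finset.sum_congr rfl fun k _ => Finset.sum_congr rfl fun l _ => by ring
    _ ≤ ∑ k, ∑ l, a k * b l * C k l := by
        refine Finset.sum_le_sum fun k _ => Finset.sum_le_sum fun l _ => ?_
        refine mul_le_mul_of_nonneg_left ?_ (mul_nonneg (hA.nonneg k) (hB.nonneg l))
        simp only [C, of_apply]
        nlinarith [two_mul_le_add_sq (P (diagRow k) (diagRow l)) (R (diagCol l) (diagCol k))]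
    _ = ∑ k, ∑ l, a k * b (π l) * C k (π l) :=
        Finset.sum_congr rfl fun k _ => (Equiv.sum_comp π fun l => a k * b l * C k l).symm
    _ ≤ ∑ k, a k * b (π k) :=
        sum_sum_mul_mul_le_of_sum_le_one hA.nonneg (fun k => hB.nonneg _) hπ
          (fun k l => by simp only [C, of_apply]; positivity) hrow hcol

section SingularValueDecomposition

variable {E F : Type*} [NormedAddCommGroup E] [InnerProductSpace ℝ E]
  [NormedAddCommGroup F] [InnerProductSpace ℝ F]

lemma orthonormal_normalize {ι : Type*} {f : ι → F}
    (horth : Pairwise fun i j => ⟪f i, f j⟫_ℝ = 0) :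
    Orthonormal ℝ fun i : {i // f i ≠ 0} => ‖f i‖⁻¹ • f i := by
  refine ⟨fun i => norm_smul_inv_norm i.2, fun i j hij => ?_⟩
  change ⟪‖f i‖⁻¹ • f i, ‖f j‖⁻¹ • f j⟫_ℝ = 0
  rw [real_inner_smul_left, real_inner_smul_right, horth (Subtype.coe_ne_coe.2 hij), mul_zero,
    mul_zero]

variable [FiniteDimensional ℝ E] [FiniteDimensional ℝ F]

lemma lt_finrank_of_ne_zero {n : ℕ} {f : Fin n → F}
    (horth : Pairwise fun i j => ⟪f i, f j⟫_ℝ = 0) (hanti : Antitone fun i => ‖f i‖)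
    {j : Fin n} (hj : f j ≠ 0) : (j : ℕ) < finrank ℝ F := by
  classical
  have hcard := (orthonormal_normalize horth).linearIndependent.fintype_card_le_finrank
  have hsub : Finset.Iic j ⊆ Finset.univ.filter fun i => f i ≠ 0 := fun i hi =>
    Finset.mem_filter.2 ⟨Finset.mem_univ _, norm_pos_iff.1
      ((norm_pos_iff.2 hj).trans_le (hanti (Finset.mem_Iic.1 hi)))⟩
  have := Finset.card_le_card hsub
  rw [Fin.card_Iic, ← Fintype.card_subtype] at this
  omega

lemma exists_orthonormalBasis_eq_norm_smul (hF : finrank ℝ F = n₁) {f : Fin n₂ → F}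
    (horth : Pairwise fun i j => ⟪f i, f j⟫_ℝ = 0) :
    ∃ b : OrthonormalBasis (Fin n₁) ℝ F,
      ∀ k : Fin (min n₁ n₂), f (diagCol k) = ‖f (diagCol k)‖ • b (diagRow k) := by
  set v : Fin n₁ → F := fun i => if h : (i : ℕ) < n₂ then ‖f ⟨i, h⟩‖⁻¹ • f ⟨i, h⟩ else 0
  set s : Set (Fin n₁) := {i | ∃ h : (i : ℕ) < n₂, f ⟨i, h⟩ ≠ 0}
  have hv : Orthonormal ℝ (s.domRestrict v) := by
    convert (orthonormal_normalize horth).comp (fun i : s => ⟨⟨i, i.2.1⟩, i.2.2⟩)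
      fun i j h => Subtype.ext (Fin.ext (congrArg (fun x : {i // f i ≠ 0} => (x.1 : ℕ)) h))
    ext ⟨i, hi, -⟩
    simp [v, Set.domRestrict, hi]
  obtain ⟨b, hb⟩ := hv.exists_orthonormalBasis_extension_of_card_eq (by simp [hF])
  refine ⟨b, fun k => ?_⟩
  by_cases hk : f (diagCol k) = 0
  · simp [hk]
  have hks : diagRow k ∈ s := ⟨k.2.trans_le (min_le_right _ _), hk⟩
  rw [hb _ hks]
  simp only [v, dif_pos hks.1]
  exact (smul_inv_smul₀ (norm_ne_zero_iff.2 hk) _).symm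

/-- An eigenbasis of `L† L` is mapped by `L` to an orthogonal family. -/
lemma exists_orthonormalBasis_orthogonal_image {n : ℕ} (hE : finrank ℝ E = n) (L : E →ₗ[ℝ] F) :
    ∃ e : OrthonormalBasis (Fin n) ℝ E, (Pairwise fun i j => ⟪L (e i), L (e j)⟫_ℝ = 0) ∧
      Antitone fun i => ‖L (e i)‖ := by
  have hT := LinearMap.isSymmetric_adjoint_comp_self L
  set e := hT.eigenvectorBasis hE
  have hinner (i j : Fin n) :
      ⟪L (e i), L (e j)⟫_ℝ = hT.eigenvalues hE j * ⟪e i, e j⟫_ℝ := by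
    rw [← LinearMap.adjoint_inner_right, ← LinearMap.comp_apply, hT.apply_eigenvectorBasis,
      RCLike.ofReal_real_eq_id, id, real_inner_smul_right]
  have hsq (i : Fin n) : ‖L (e i)‖ ^ 2 = hT.eigenvalues hE i := by
    rw [← real_inner_self_eq_norm_sq, hinner, real_inner_self_eq_norm_sq, e.orthonormal.1 i,
      one_pow, mul_one]
  refine ⟨e, fun i j hij => ?_, fun i j hij => ?_⟩
  · change ⟪L (e i), L (e j)⟫_ℝ = 0
    rw [hinner, e.orthonormal.2 hij, mul_zero]
  · rw [← pow_le_pow_iff_left₀ (norm_nonneg _) (norm_nonneg _) two_ne_zero, hsq, hsq]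
    exact hT.eigenvalues_antitone hE hij

theorem exists_isSVD (Z : Matrix (Fin n₁) (Fin n₂) ℝ) : ∃ V s U, IsSVD Z V s U := by
  set L := toEuclideanLin Z
  obtain ⟨e, horth, hanti⟩ :=
    exists_orthonormalBasis_orthogonal_image (finrank_euclideanSpace_fin (n := n₂)) L
  obtain ⟨b, hb⟩ := exists_orthonormalBasis_eq_norm_smul
    (finrank_euclideanSpace_fin (n := n₁)) horth
  set U : Matrix (Fin n₂) (Fin n₂) ℝ := of fun i j => e j i
  set V : Matrix (Fin n₁) (Fin n₁) ℝ := of fun i j => b j i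
  have hU := of_orthonormalBasis_mem_orthogonalGroup e
  have hV := of_orthonormalBasis_mem_orthogonalGroup b
  set s : Fin (min n₁ n₂) → ℝ := fun k => ‖L (e (diagCol k))‖
  have hcol : Z * U = V * rectDiag s := by
    ext x j
    have hZU : (Z * U) x j = L (e j) x := by simp [L, U, mul_apply, mulVec, dotProduct]
    rw [hZU]
    by_cases hj : (j : ℕ) < n₁
    · obtain ⟨k, rfl⟩ : ∃ k, diagCol k = j := ⟨⟨j, lt_min hj j.2⟩, rfl⟩
      rw [mul_rectDiag_apply_diagCol, hb]
      simp [V, s]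
    · rw [mul_rectDiag_apply_of_le _ _ _ (not_lt.1 hj)]
      by_contra hne
      have := lt_finrank_of_ne_zero horth hanti (j := j) fun h => hne (by simp [h])
      rw [finrank_euclideanSpace_fin] at this
      exact hj this
  have hZ : Z = V * rectDiag s * Uᵀ := by
    rw [← hcol, Matrix.mul_assoc, (mem_orthogonalGroup_iff _ _).1 hU, Matrix.mul_one]
  exact ⟨V, s, U, hZ ▸ isSVD_of_mem_orthogonalGroup hV hU fun k => norm_nonneg _⟩

end SingularValueDecomposition

lemma _root_.ERealConvex.le_coe {E : Type*} [AddCommGroup E] [Module ℝ E] {f : E → EReal}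
    (hf : ERealConvex f) {x y : E} {A B : ℝ} (hx : f x = A) (hy : f y = B) {a b : ℝ}
    (ha : 0 ≤ a) (hb : 0 ≤ b) (hab : a + b = 1) :
    f (a • x + b • y) ≤ ((a * A + b * B : ℝ) : EReal) := by
  simpa [hx, hy] using hf x y a b ha hb hab

section ProxVec

variable {n : ℕ} {γ : ℝ} {φ : (Fin n → ℝ) → EReal} {t p : Fin n → ℝ}

lemma proxObjVec_of_eq_coe {z : Fin n → ℝ} {B : ℝ} (h : φ z = B) :
    proxObjVec γ φ t z = ((1 / 2 * ∑ i, (t i - z i) ^ 2 + γ * B : ℝ) : EReal) := by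
  rw [proxObjVec, h, ← EReal.coe_mul, ← EReal.coe_add]

lemma proxObjVec_of_eq_top (hγ : 0 < γ) {z : Fin n → ℝ} (h : φ z = ⊤) :
    proxObjVec γ φ t z = ⊤ := by
  rw [proxObjVec, h, EReal.coe_mul_top_of_pos hγ, EReal.add_top_of_ne_bot (EReal.coe_ne_bot _)]

lemma exists_eq_coe_of_forall_proxObjVec_le (hγ : 0 < γ) (htop : ∃ z, φ z ≠ ⊤)
    (hbot : ∀ z, φ z ≠ ⊥) (hp : ∀ z, proxObjVec γ φ t p ≤ proxObjVec γ φ t z) :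
    ∃ A : ℝ, φ p = A := by
  refine ⟨(φ p).toReal, (EReal.coe_toReal (fun hp_top => ?_) (hbot p)).symm⟩
  obtain ⟨z, hz⟩ := htop
  have := hp z
  rw [proxObjVec_of_eq_top hγ hp_top, top_le_iff,
    proxObjVec_of_eq_coe (EReal.coe_toReal hz (hbot z)).symm] at this
  exact EReal.coe_ne_top _ this

theorem sum_mul_sub_le_of_forall_proxObjVec_le (hγ : 0 < γ) (hconv : ERealConvex φ)
    (hbot : ∀ z, φ z ≠ ⊥) (hp : ∀ z, proxObjVec γ φ t p ≤ proxObjVec γ φ t z)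
    {A : ℝ} (hA : φ p = A) {w : Fin n → ℝ} {B : ℝ} (hB : φ w = B) :
    ∑ i, (t i - p i) * (w i - p i) ≤ γ * (B - A) := by
  set S := ∑ i, (t i - p i) * (w i - p i)
  set T := ∑ i, (w i - p i) ^ 2
  -- Compare `p` with the points `p + s (w - p)` of the segment towards `w`, and let `s → 0⁺`.
  have hseg (s : ℝ) (hs : s ∈ Set.Ioc 0 1) : S ≤ γ * (B - A) + s * T / 2 := by
    set z := (1 - s) • p + s • w
    have hz : φ z ≤ (((1 - s) * A + s * B : ℝ) : EReal) :=
      hconv.le_coe hA hB (by linarith [hs.2]) hs.1.le (by ring)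
    obtain ⟨C, hC⟩ : ∃ C : ℝ, φ z = C :=
      ⟨_, (EReal.coe_toReal (ne_top_of_le_ne_top (EReal.coe_ne_top _) hz) (hbot z)).symm⟩
    have hCle : C ≤ (1 - s) * A + s * B := by rwa [hC, EReal.coe_le_coe_iff] at hz
    have hopt := hp z
    rw [proxObjVec_of_eq_coe hA, proxObjVec_of_eq_coe hC, EReal.coe_le_coe_iff] at hopt
    have hexp : ∑ i, (t i - z i) ^ 2 = ∑ i, (t i - p i) ^ 2 - 2 * s * S + s ^ 2 * T := by
      simp only [z, S, T, Pi.add_apply, Pi.smul_apply, smul_eq_mul, Finset.mul_sum,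
        ← Finset.sum_sub_distrib, ← Finset.sum_add_distrib]
      exact Finset.sum_congr rfl fun i _ => by ring
    have : s * S ≤ s * (γ * (B - A) + s * T / 2) := by
      nlinarith [mul_le_mul_of_nonneg_left hCle hγ.le]
    exact le_of_mul_le_mul_left this hs.1
  have hlim : Tendsto (fun s => γ * (B - A) + s * T / 2) (𝓝[>] 0) (𝓝 (γ * (B - A))) := by
    have : Continuous fun s : ℝ => γ * (B - A) + s * T / 2 := by fun_prop
    simpa using (this.tendsto 0).mono_left nhdsWithin_le_nhds
  exact ge_of_tendsto hlim (eventually_of_mem (Ioc_mem_nhdsGT zero_lt_one) hseg)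

end ProxVec

section ProxMat

variable {γ : ℝ} {J : Matrix (Fin n₁) (Fin n₂) ℝ → EReal} {X Y : Matrix (Fin n₁) (Fin n₂) ℝ}

lemma proxObjMat_of_eq_coe {Z : Matrix (Fin n₁) (Fin n₂) ℝ} {B : ℝ} (h : J Z = B) :
    proxObjMat γ J X Z = ((frobeniusInner (X - Z) (X - Z) / 2 + γ * B : ℝ) : EReal) := by
  have hsq : ∑ i, ∑ j, (X i j - Z i j) ^ 2 = frobeniusInner (X - Z) (X - Z) := by
    simp only [frobeniusInner, Matrix.sub_apply, sq]
  rw [proxObjMat, h, hsq, ← EReal.coe_mul, ← EReal.coe_add]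
  congr 1
  ring

lemma proxObjMat_of_eq_top (hγ : 0 < γ) {Z : Matrix (Fin n₁) (Fin n₂) ℝ} (h : J Z = ⊤) :
    proxObjMat γ J X Z = ⊤ := by
  rw [proxObjMat, h, EReal.coe_mul_top_of_pos hγ, EReal.add_top_of_ne_bot (EReal.coe_ne_bot _)]

theorem proxObjMat_minimizer_of_variational (hγ : 0 < γ) (hbot : ∀ Z, J Z ≠ ⊥) {A : ℝ}
    (hY : J Y = A)
    (hvar : ∀ Z (B : ℝ), J Z = B → frobeniusInner (X - Y) (Z - Y) ≤ γ * (B - A)) :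
    (∀ Z, proxObjMat γ J X Y ≤ proxObjMat γ J X Z) ∧
      ∀ Z, (∀ W, proxObjMat γ J X Z ≤ proxObjMat γ J X W) → Z = Y := by
  have hgrowth (Z) : proxObjMat γ J X Y + ((frobeniusInner (Z - Y) (Z - Y) / 2 : ℝ) : EReal) ≤
      proxObjMat γ J X Z := by
    obtain hZ | ⟨B, hB⟩ : J Z = ⊤ ∨ ∃ B : ℝ, J Z = B := by
      by_cases h : J Z = ⊤
      · exact .inl h
      · exact .inr ⟨_, (EReal.coe_toReal h (hbot Z)).symm⟩
    · rw [proxObjMat_of_eq_top hγ hZ]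
      exact le_top
    rw [proxObjMat_of_eq_coe hY, proxObjMat_of_eq_coe hB, ← EReal.coe_add, EReal.coe_le_coe_iff]
    have hsplit : X - Z = (X - Y) - (Z - Y) := by abel
    rw [hsplit, frobeniusInner_sub_sub_self (X - Y)]
    linarith [hvar Z B hB]
  refine ⟨fun Z => le_trans ?_ (hgrowth Z), fun Z hZ => ?_⟩
  · rw [proxObjMat_of_eq_coe hY, ← EReal.coe_add, EReal.coe_le_coe_iff]
    linarith [frobeniusInner_self_nonneg (Z - Y)]
  · have := (hgrowth Z).trans (hZ Y)
    rw [proxObjMat_of_eq_coe hY, ← EReal.coe_add, EReal.coe_le_coe_iff] at this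
    exact sub_eq_zero.1 (frobeniusInner_self_eq_zero.1
      (le_antisymm (by linarith) (frobeniusInner_self_nonneg _)))

end ProxMat

/-- By von Neumann's inequality, the worst case for `Z` is to share the singular vectors of
`X - Y`; there the inequality reduces to the vector one, `hvec`. -/
theorem frobeniusInner_sub_le_of_spectral {φ : (Fin (min n₁ n₂) → ℝ) → EReal}
    (hsym : ∀ (σ : Equiv.Perm (Fin (min n₁ n₂))) Λ, φ (fun i => Λ (σ i)) = φ Λ)
    (habs : ∀ Λ : Fin (min n₁ n₂) → ℝ, φ (fun i => |Λ i|) = φ Λ)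
    {J : Matrix (Fin n₁) (Fin n₂) ℝ → EReal} (hJ : ∀ X V Λ U, IsSVD X V Λ U → J X = φ Λ)
    {V : Matrix (Fin n₁) (Fin n₁) ℝ} {U : Matrix (Fin n₂) (Fin n₂) ℝ}
    (hV : V ∈ orthogonalGroup _ ℝ) (hU : U ∈ orthogonalGroup _ ℝ) {d p : Fin (min n₁ n₂) → ℝ}
    {γ A : ℝ} (hvec : ∀ w (B : ℝ), φ w = B → ∑ i, d i * (w i - p i) ≤ γ * (B - A))
    {Z : Matrix (Fin n₁) (Fin n₂) ℝ} {B : ℝ} (hZ : J Z = B) :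
    frobeniusInner (V * rectDiag d * Uᵀ) (Z - V * rectDiag p * Uᵀ) ≤ γ * (B - A) := by
  obtain ⟨W, s, Q, hZs⟩ := exists_isSVD Z
  obtain ⟨V', hD⟩ := exists_isSVD_abs hV hU d
  obtain ⟨π, hπ⟩ := exists_perm_monovary (fun k => |d k|) s
  set w : Fin (min n₁ n₂) → ℝ := fun k => (if d k < 0 then -1 else 1) * s (π k)
  have hw : φ w = B := by
    have : (fun k => |w k|) = fun k => s (π k) := by
      ext k
      simp [w, apply_ite, abs_of_nonneg (hZs.nonneg _)]
    rw [← habs, this, hsym, ← hJ _ _ _ _ hZs, hZ]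
  have hdw : ∑ k, d k * w k = ∑ k, |d k| * s (π k) := by
    refine Finset.sum_congr rfl fun k _ => ?_
    by_cases hk : d k < 0
    · simp [w, hk, abs_of_neg hk]
    · simp [w, hk, abs_of_nonneg (not_lt.1 hk)]
  have hvN := frobeniusInner_le_of_isSVD hD hZs hπ
  have hvar := hvec w B hw
  rw [frobeniusInner_sub_right, frobeniusInner_mul_mul_transpose hV hU, frobeniusInner_rectDiag]
  simp only [mul_sub, Finset.sum_sub_distrib] at hvar
  linarith

end SpectralProx

open SpectralProx

theorem prox_spectral_function {n₁ n₂ : ℕ}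
    (φ : (Fin (min n₁ n₂) → ℝ) → EReal)
    (hproper_top : ∃ Λ, φ Λ ≠ ⊤) (hproper_bot : ∀ Λ, φ Λ ≠ ⊥)
    (hconv : ERealConvex φ)
    (hsym : ∀ (σ : Equiv.Perm (Fin (min n₁ n₂))) (Λ : Fin (min n₁ n₂) → ℝ),
      φ (fun i => Λ (σ i)) = φ Λ)
    (habs : ∀ Λ : Fin (min n₁ n₂) → ℝ, φ (fun i => |Λ i|) = φ Λ)
    (J : Matrix (Fin n₁) (Fin n₂) ℝ → EReal)
    (hJ : ∀ X V Λ U, IsSVD X V Λ U → J X = φ Λ)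
    (γ : ℝ) (hγ : 0 < γ)
    (X : Matrix (Fin n₁) (Fin n₂) ℝ)
    (V : Matrix (Fin n₁) (Fin n₁) ℝ) (Λ : Fin (min n₁ n₂) → ℝ)
    (U : Matrix (Fin n₂) (Fin n₂) ℝ) (hSVD : IsSVD X V Λ U)
    (p : Fin (min n₁ n₂) → ℝ)
    (hp : ∀ z, proxObjVec γ φ Λ p ≤ proxObjVec γ φ Λ z) :
    (∀ Z, proxObjMat γ J X (V * rectDiag p * Uᵀ) ≤ proxObjMat γ J X Z) ∧
      (∀ Z, (∀ W, proxObjMat γ J X Z ≤ proxObjMat γ J X W) →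
        Z = V * rectDiag p * Uᵀ) := by
  have hV := hSVD.left_mem_orthogonalGroup
  have hU := hSVD.right_mem_orthogonalGroup
  obtain ⟨A, hA⟩ := exists_eq_coe_of_forall_proxObjVec_le hγ hproper_top hproper_bot hp
  obtain ⟨V', hY⟩ := exists_isSVD_abs hV hU p
  refine proxObjMat_minimizer_of_variational (A := A) hγ (fun Z => ?_)
    (by rw [hJ _ _ _ _ hY, habs, hA]) fun Z B hB => ?_
  · obtain ⟨W, s, Q, hZ⟩ := exists_isSVD Z
    rw [hJ _ _ _ _ hZ]
    exact hproper_bot s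
  · rw [hSVD.eq, ← Matrix.sub_mul, ← Matrix.mul_sub, ← rectDiag_sub]
    exact frobeniusInner_sub_le_of_spectral hsym habs hJ hV hU
      (fun w B hB => sum_mul_sub_le_of_forall_proxObjVec_le hγ hconv hproper_bot hp hA hB) hB
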